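/- arXiv:1103.2349 — 2 statements merged into one kernel-verified Lean document; each statement's English description precedes it below -/
import Mathlib

section
/- The operator T : c₀ ⇉ ℓ¹ with graph {(−G(y), y) : y ∈ ℓ¹, G(y) ∈ c₀} is monotone: for any (x, y), (x', y') in its graph, ⟨x − x', y − y'⟩ ≥ 0 (indeed = 0). -/
/-! With `T N = ∑_{i<N} z i` and `S = ∑ z`, the Gossez operator reads `G z n = S - T (n+1) - T n`,
so `G z n * z n = (S T(n+1) - T(n+1)²) - (S T n - T n²)`. The pairing `∑_{n<N} G z n * z n`
therefore telescopes to `(S - T N) T N → 0`: `G` is skew on `ℓ¹`. Since `G` is linear,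
`⟨x - x', y - y'⟩ = -⟨G (y - y'), y - y'⟩ = 0` on the graph of `T`. -/

open Filter Topology

/-- The Gossez operator, with sequences indexed from `0`:
entry `n` (paper index `n+1`) is `∑_{i ≥ n+1} y i − ∑_{i ≤ n-1} y i`. -/
noncomputable def G (y : ℕ → ℝ) (n : ℕ) : ℝ :=
  (∑' i : ℕ, y (n + 1 + i)) - ∑ i ∈ Finset.range n, y i

open Finset

section Gossez

variable {z : ℕ → ℝ}

lemma G_sub {y y' : ℕ → ℝ} (hy : Summable y) (hy' : Summable y') : G (y - y') = G y - G y' := by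
  funext n
  have htail : ∀ {w : ℕ → ℝ}, Summable w → Summable fun i => w (n + 1 + i) := fun hw => by
    simpa only [add_comm] using (summable_nat_add_iff (n + 1)).2 hw
  simp only [G, Pi.sub_apply, (htail hy).tsum_sub (htail hy'), sum_sub_distrib]
  ring

lemma G_eq_tsum_sub_sum (hz : Summable z) (n : ℕ) :
    G z n = ∑' i, z i - ∑ i ∈ range (n + 1), z i - ∑ i ∈ range n, z i := by
  have htail : ∑' i, z (n + 1 + i) = ∑' i, z i - ∑ i ∈ range (n + 1), z i := by
    rw [← hz.sum_add_tsum_nat_add (n + 1), add_sub_cancel_left]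
    simp only [add_comm]
  rw [G, htail]

lemma tendsto_G (hz : Summable z) : Tendsto (G z) atTop (𝓝 (-∑' i, z i)) := by
  have hT : Tendsto (fun N => ∑ i ∈ range N, z i) atTop (𝓝 (∑' i, z i)) :=
    hz.hasSum.tendsto_sum_nat
  have hT₁ := (tendsto_add_atTop_iff_nat 1).2 hT
  have hlim := (tendsto_const_nhds (x := ∑' i, z i)).sub hT₁ |>.sub hT
  rw [sub_self, zero_sub] at hlim
  simpa only [← G_eq_tsum_sub_sum hz] using hlim

lemma sum_range_G_mul_self (hz : Summable z) (N : ℕ) :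
    ∑ n ∈ range N, G z n * z n = (∑' i, z i - ∑ i ∈ range N, z i) * ∑ i ∈ range N, z i := by
  induction N with
  | zero => simp
  | succ N ih =>
    rw [sum_range_succ, ih, G_eq_tsum_sub_sum hz, sum_range_succ]
    ring

lemma summable_G_mul_self (hz : Summable z) : Summable fun n => G z n * z n := by
  refine summable_of_isBigO_nat hz ?_
  simpa only [one_mul] using ((tendsto_G hz).isBigO_one ℝ).mul (Asymptotics.isBigO_refl z atTop)

theorem tsum_G_mul_self (hz : Summable z) : ∑' n, G z n * z n = 0 := by
  have hT : Tendsto (fun N => ∑ i ∈ range N, z i) atTop (𝓝 (∑' i, z i)) :=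
    hz.hasSum.tendsto_sum_nat
  have hlim := (tendsto_const_nhds (x := ∑' i, z i)).sub hT |>.mul hT
  rw [sub_self, zero_mul] at hlim
  refine tendsto_nhds_unique (summable_G_mul_self hz).hasSum.tendsto_sum_nat ?_
  simpa only [sum_range_G_mul_self hz] using hlim

end Gossez

theorem T_monotone_general (y y' : ℕ → ℝ)
    (hy : Summable fun i => |y i|) (hy' : Summable fun i => |y' i|) :
    ∑' n, ((-G y n) - (-G y' n)) * (y n - y' n) = 0 := by
  have hys : Summable y := summable_abs_iff.mp hy
  have hys' : Summable y' := summable_abs_iff.mp hy'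
  calc ∑' n, ((-G y n) - (-G y' n)) * (y n - y' n)
      = -∑' n, G (y - y') n * (y - y') n := by
        rw [← tsum_neg, G_sub hys hys']
        congr 1
        funext n
        simp only [Pi.sub_apply]
        ring
    _ = 0 := by rw [tsum_G_mul_self (z := y - y') (hys.sub hys'), neg_zero]

/-- The operator with graph `{(-G y, y) : y ∈ l1, G y ∈ c₀}` is monotone
(indeed the duality pairing vanishes). -/
theorem T_monotone (y y' : ℕ → ℝ)
    (hy : Summable fun i => |y i|) (hy' : Summable fun i => |y' i|)
    (hcy : Tendsto (G y) atTop (𝓝 0)) (hcy' : Tendsto (G y') atTop (𝓝 0)) :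
    ∑' n, ((-G y n) - (-G y' n)) * (y n - y' n) = 0 :=
  T_monotone_general y y' hy hy'
end

section
/- Let T : c₀ ⇉ ℓ¹ have graph {(−G(y), y) : y ∈ ℓ¹, ∑_i y_i = 0} and let T̃ : ℓ∞ ⇉ ℓ¹ be its Gossez monotone closure: graph(T̃) = {(z, y) ∈ ℓ∞ × ℓ¹ : ⟨z − x', y − y'⟩ ≥ 0 for all (x', y') ∈ graph(T)}. If ỹ ∈ ℓ¹ with ∑_i ỹ_i > 0, then for every τ > 0 the pair (x^τ, τỹ) with x^τ = −G(τỹ) + (1/τ)e lies in graph(T̃). -/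
/-!
By linearity of `G` the pairing is `∑ₙ (1/τ − G d n) d n` with `d = τ ỹ − y'`. For the partial
sums `P N = ∑_{i<N} d i` one has `-G d n = P (n+1) + P n − ∑ d`, so its `n`-th term is
`P (n+1)² − P n² + (1/τ − ∑ d) d n`. The partial sums of the pairing therefore telescope to
`P N² + (1/τ − ∑ d) P N → (1/τ) ∑ d = ∑ ỹ > 0`.
-/

open Filter Topology

open Finset

lemma G_eq_tsum_sub {y : ℕ → ℝ} (hy : Summable y) (n : ℕ) :
    G y n = (∑' i, y i) - (∑ i ∈ range (n + 1), y i) - ∑ i ∈ range n, y i := by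
  rw [G, ← hy.sum_add_tsum_nat_add (n + 1)]
  simp_rw [Nat.add_comm (n + 1)]
  ring

lemma G_sub_s14 {a b : ℕ → ℝ} (ha : Summable a) (hb : Summable b) (n : ℕ) :
    G (fun i => a i - b i) n = G a n - G b n := by
  rw [G_eq_tsum_sub (ha.sub hb), G_eq_tsum_sub ha, G_eq_tsum_sub hb, ha.tsum_sub hb]
  simp only [sum_sub_distrib]
  ring

lemma sum_range_sub_G_mul {d : ℕ → ℝ} (hd : Summable d) (c : ℝ) (N : ℕ) :
    ∑ n ∈ range N, (c - G d n) * d n =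
      (∑ i ∈ range N, d i) ^ 2 + (c - ∑' i, d i) * ∑ i ∈ range N, d i := by
  induction N with
  | zero => simp
  | succ N ih =>
    rw [sum_range_succ, ih, G_eq_tsum_sub hd, sum_range_succ d N]
    ring

lemma tendsto_sum_range_sub_G_mul {d : ℕ → ℝ} (hd : Summable d) (c : ℝ) :
    Tendsto (fun N => ∑ n ∈ range N, (c - G d n) * d n) atTop (𝓝 (c * ∑' i, d i)) := by
  simp_rw [sum_range_sub_G_mul hd]
  have hP := hd.hasSum.tendsto_sum_nat
  convert (hP.pow 2).add (tendsto_const_nhds.mul hP) using 2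
  ring

/-- Covers non-summable `f` too, where `∑' n, f n = 0`. -/
lemma tsum_nonneg_of_tendsto_sum_range {f : ℕ → ℝ} {a : ℝ}
    (hf : Tendsto (fun N => ∑ n ∈ range N, f n) atTop (𝓝 a)) (ha : 0 ≤ a) :
    0 ≤ ∑' n, f n := by
  by_cases hs : Summable f
  · rwa [tendsto_nhds_unique hs.hasSum.tendsto_sum_nat hf]
  · rw [tsum_eq_zero_of_not_summable hs]

/-- For `ytil ∈ l1` with `∑ i, ytil i > 0` and `τ > 0`, the pair `(x^τ, τ • ytil)` with
`x^τ = -G (τ • ytil) + (1/τ) e` lies in the Gossez monotone closure of `T`. -/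
theorem extension_point_in_closure (ytil : ℕ → ℝ) (τ : ℝ)
    (hytil : Summable fun i => |ytil i|) (hpos : 0 < ∑' i, ytil i) (hτ : 0 < τ) :
    ∀ y' : ℕ → ℝ, Summable (fun i => |y' i|) → (∑' i, y' i) = 0 →
      ∑' n, ((-G (fun i => τ * ytil i) n + 1 / τ) - (-G y' n)) *
        (τ * ytil n - y' n) ≥ 0 := by
  intro y' hy' hsum
  have hu : Summable fun i => τ * ytil i := (summable_abs_iff.mp hytil).mul_left τ
  have hy's : Summable y' := summable_abs_iff.mp hy'
  have hd := hu.sub hy's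
  have hterm : ∀ n, ((-G (fun i => τ * ytil i) n + 1 / τ) - (-G y' n)) * (τ * ytil n - y' n) =
      (1 / τ - G (fun i => τ * ytil i - y' i) n) * (τ * ytil n - y' n) := fun n => by
    rw [G_sub_s14 hu hy's]
    ring
  have hD : ∑' i, (τ * ytil i - y' i) = τ * ∑' i, ytil i := by
    rw [hu.tsum_sub hy's, hsum, sub_zero, tsum_mul_left]
  simp_rw [hterm]
  refine tsum_nonneg_of_tendsto_sum_range (tendsto_sum_range_sub_G_mul hd _) ?_
  rw [hD]
  positivity
end
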